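/- arXiv:2104.11913 — 2 statements merged into one kernel-verified Lean document; each statement's English description precedes it below -/
import Mathlib

section
/- Let H be a 2×2 complex Hermitian matrix with H 0 0 = 0 and H 1 1 = 0. For z ∈ ℂ let N(z) be the upper unitriangular matrix with rows (1, z) and (0, 1), and M(z) the lower unitriangular matrix with rows (1, 0) and (z, 1). If N(i t) · H · N(i t)ᴴ = H for every real t, then M(i t) · H · M(i t)ᴴ = H for every real t. -/
open Matrix Complex

/-- The upper unitriangular matrix with rows `(1, z)` and `(0, 1)`,
representing a null rotation about `k`. -/
def nullRotK (z : ℂ) : Matrix (Fin 2) (Fin 2) ℂ := !![1, z; 0, 1]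

/-- The lower unitriangular matrix with rows `(1, 0)` and `(z, 1)`,
representing a null rotation about `l`. -/
def nullRotL (z : ℂ) : Matrix (Fin 2) (Fin 2) ℂ := !![1, 0; z, 1]

/-- A 2×2 Hermitian matrix with vanishing diagonal which is invariant under
all null rotations about `k` with pure imaginary parameter is also invariant
under all null rotations about `l` with pure imaginary parameter. -/
theorem nullRotK_invariant_implies_nullRotL_invariant
    (H : Matrix (Fin 2) (Fin 2) ℂ) (hH : H.IsHermitian)
    (h00 : H 0 0 = 0) (h11 : H 1 1 = 0)
    (hN : ∀ t : ℝ, nullRotK (I * t) * H * (nullRotK (I * t))ᴴ = H) :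
    ∀ t : ℝ, nullRotL (I * t) * H * (nullRotL (I * t))ᴴ = H := by
  have key : H 1 0 = H 0 1 := by
    have h := congrFun (congrFun (hN 1) 0) 0
    simp [nullRotK, Matrix.mul_apply, Matrix.vecMul, dotProduct, Fin.sum_univ_two,
      conjTranspose_apply, h00, h11] at h
    have h' : I * (H 1 0 - H 0 1) = 0 := by linear_combination h
    rcases mul_eq_zero.mp h' with h2 | h2
    · exact absurd h2 I_ne_zero
    · exact sub_eq_zero.mp h2
  intro t
  ext i j
  fin_cases i <;> fin_cases j <;>
    simp [nullRotL, Matrix.mul_apply, Matrix.vecMul, dotProduct, Fin.sum_univ_two,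
      conjTranspose_apply, h00, h11, key] <;> ring_nf
end

section
/- Let p be a nonzero real number and let α, β, π, τ, x, y be complex numbers with Re(π) + Re(τ) = 0. Suppose that 2x − 2·conj(y) = (2conj(α) − 2β − conj(π))·(2p) − 2πp and −x − 2·conj(x) + 3y = (−2α + 2conj(β) + π − conj(τ))·(2p) + 2(conj(π) − τ)·p. Then Re(α) − Re(β) + Re(π) = 0, and moreover x − conj(x) = y − conj(y) = ((conj(α) − β) − (α − conj(β)))·p. -/
/-- In the conformally flat Segre type [1(11,1)] case with `Φ₀₂' = 2Φ₁₁'`,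
`Φ₁₁' = p` real and nonzero, the Bianchi identities (Bg) and (Bj) (with
`x = δΦ₁₁'`, `y = δΛ`) imply `Re(α) − Re(β) + Re(π) = 0` and
`x − conj(x) = y − conj(y) = ((conj(α) − β) − (α − conj(β)))·p`. -/
theorem bianchi_Bg_Bj_consequences
    (p : ℝ) (hp : p ≠ 0) (α β π τ x y : ℂ)
    (hpt : π.re + τ.re = 0)
    (h1 : 2 * x - 2 * (starRingEnd ℂ) y =
      (2 * (starRingEnd ℂ) α - 2 * β - (starRingEnd ℂ) π) * (2 * (p : ℂ)) - 2 * π * (p : ℂ))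
    (h2 : -x - 2 * (starRingEnd ℂ) x + 3 * y =
      (-2 * α + 2 * (starRingEnd ℂ) β + π - (starRingEnd ℂ) τ) * (2 * (p : ℂ))
        + 2 * ((starRingEnd ℂ) π - τ) * (p : ℂ)) :
    α.re - β.re + π.re = 0 ∧
      x - (starRingEnd ℂ) x = y - (starRingEnd ℂ) y ∧
      y - (starRingEnd ℂ) y = (((starRingEnd ℂ) α - β) - (α - (starRingEnd ℂ) β)) * (p : ℂ) := by
  have h1r := congrArg Complex.re h1
  have h1i := congrArg Complex.im h1
  have h2r := congrArg Complex.re h2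
  have h2i := congrArg Complex.im h2
  simp [Complex.mul_re, Complex.mul_im] at h1r h1i h2r h2i
  refine ⟨?_, ?_, ?_⟩
  · have hz : p * (α.re - β.re + π.re) = 0 := by
      linear_combination (-3/4 : ℝ) * h1r + (-1/2 : ℝ) * h2r + (2*p) * hpt
    rcases mul_eq_zero.mp hz with h | h
    · exact absurd h hp
    · linarith
  · apply Complex.ext
    · simp
    · simp only [Complex.sub_im, Complex.conj_im]
      linear_combination (2 : ℝ) * h1i - (2 : ℝ) * h2i
  · apply Complex.ext
    · simp [Complex.mul_re]
    · simp only [Complex.sub_im, Complex.conj_im, Complex.mul_im, Complex.sub_re,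
        Complex.conj_re, Complex.ofReal_re, Complex.ofReal_im]
      linear_combination (-1/2 : ℝ) * h1i + h2i
end
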